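/- arXiv:2603.18730 — 2 statements merged into one kernel-verified Lean document; each statement's English description precedes it below -/
import Mathlib

section
/- In the counterexample instance with stars A (r=0,d=3,p=2,w=1), B (r=1,d=3,p=2,w=1), C (r=0,d=2,p=1,w=2), D (r=1,d=3,p=1,w=2) and 3 nights of length 3, the maximum total gain achievable in a single night is 4, achieved by scheduling C at time [0,1) and D at times [1,2) (and optionally not A or B, since A and B each need 2 consecutive units). -/
/-! Counterexample instance: stars A,B,C,D = 0,1,2,3 with
A (r=0,d=3,p=2,w=1), B (r=1,d=3,p=2,w=1), C (r=0,d=2,p=1,w=2), D (r=1,d=3,p=1,w=2);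
a night is the interval [0,3). -/

def rel : Fin 4 → ℕ := ![0, 1, 0, 1]
def dl  : Fin 4 → ℕ := ![3, 3, 2, 3]
def pt  : Fin 4 → ℕ := ![2, 2, 1, 1]
def wt  : Fin 4 → ℕ := ![1, 1, 2, 2]

def NightFeasible (s : Fin 4 → Option ℕ) : Prop :=
  (∀ j t, s j = some t → rel j ≤ t ∧ t + pt j ≤ dl j) ∧
  (∀ j k tj tk, j ≠ k → s j = some tj → s k = some tk →
    tj + pt j ≤ tk ∨ tk + pt k ≤ tj)

def nightGain (s : Fin 4 → Option ℕ) : ℕ :=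
  ∑ j : Fin 4, if (s j).isSome then wt j else 0

/-! Disjoint jobs inside a night of length 3 have total processing time at most 3. The only
jobs of weight 2 are C and D, so a gain above 4 needs C, D and one of A, B, whose processing
times add up to 4. -/

open Finset

theorem sum_length_le_of_pairwise_disjoint {ι : Type*} (S : Finset ι) (t p : ι → ℕ) (T : ℕ)
    (hfit : ∀ i ∈ S, t i + p i ≤ T)
    (hdisj : (S : Set ι).Pairwise fun i j => t i + p i ≤ t j ∨ t j + p j ≤ t i) :
    ∑ i ∈ S, p i ≤ T := by
  have hpd : (S : Set ι).PairwiseDisjoint fun i => Ico (t i) (t i + p i) := by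
    intro i hi j hj hij
    refine disjoint_left.mpr fun x hxi hxj => ?_
    simp only [mem_Ico] at hxi hxj
    rcases hdisj hi hj hij with h | h <;> omega
  calc ∑ i ∈ S, p i = #(S.biUnion fun i => Ico (t i) (t i + p i)) := by
        simp [card_biUnion hpd]
    _ ≤ #(range T) := card_le_card fun x hx => by
        obtain ⟨i, hi, hx⟩ := mem_biUnion.mp hx
        have := hfit i hi
        simp only [mem_Ico, mem_range] at hx ⊢
        omega
    _ = T := card_range T

def scheduled (s : Fin 4 → Option ℕ) : Finset (Fin 4) := univ.filter fun j => (s j).isSome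

theorem nightGain_eq_sum_scheduled (s : Fin 4 → Option ℕ) :
    nightGain s = ∑ j ∈ scheduled s, wt j :=
  (sum_filter _ _).symm

theorem NightFeasible.sum_pt_scheduled_le {s : Fin 4 → Option ℕ} (hs : NightFeasible s) :
    ∑ j ∈ scheduled s, pt j ≤ 3 := by
  have hsome : ∀ j ∈ scheduled s, s j = some ((s j).getD 0) := fun j hj => by
    obtain ⟨x, hx⟩ := Option.isSome_iff_exists.mp (mem_filter.mp hj).2
    simp [hx]
  refine sum_length_le_of_pairwise_disjoint _ (fun j => (s j).getD 0) pt 3 (fun j hj => ?_)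
    fun j hj k hk hjk => hs.2 j k _ _ hjk (hsome j hj) (hsome k hk)
  have hdl : dl j ≤ 3 := by fin_cases j <;> decide
  exact (hs.1 j _ (hsome j hj)).2.trans hdl

theorem sum_wt_le_four_of_sum_pt_le_three :
    ∀ S : Finset (Fin 4), ∑ j ∈ S, pt j ≤ 3 → ∑ j ∈ S, wt j ≤ 4 := by
  decide

theorem nightFeasible_C_at_zero_D_at_one : NightFeasible ![none, none, some 0, some 1] := by
  constructor
  · intro j t hj
    fin_cases j <;> simp [rel, dl, pt] at hj ⊢ <;> omega
  · intro j k tj tk hjk hj hk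
    fin_cases j <;> fin_cases k <;> simp [pt] at hj hk hjk ⊢ <;> omega

/-- the maximum single-night gain is 4, achieved by scheduling
C at time 0 (interval [0,1)) and D at time 1 (interval [1,2)). -/
theorem max_single_night_gain_is_four :
    NightFeasible ![none, none, some 0, some 1] ∧
    nightGain ![none, none, some 0, some 1] = 4 ∧
    (∀ s, NightFeasible s → nightGain s ≤ 4) := by
  refine ⟨nightFeasible_C_at_zero_D_at_one, by decide, fun s hs => ?_⟩
  rw [nightGain_eq_sum_scheduled]
  exact sum_wt_le_four_of_sum_pt_le_three _ hs.sum_pt_scheduled_le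
end

section
/- In the counterexample instance with stars A (r=0,d=3,p=2,w=1), B (r=1,d=3,p=2,w=1), C (r=0,d=2,p=1,w=2), D (r=1,d=3,p=1,w=2), no single night can schedule all four observations, and moreover no single night can achieve gain strictly greater than 4. -/
lemma add_add_le_of_pairwise_disjoint {T t₁ t₂ t₃ p₁ p₂ p₃ : ℕ}
    (h₁ : t₁ + p₁ ≤ T) (h₂ : t₂ + p₂ ≤ T) (h₃ : t₃ + p₃ ≤ T)
    (h₁₂ : t₁ + p₁ ≤ t₂ ∨ t₂ + p₂ ≤ t₁) (h₁₃ : t₁ + p₁ ≤ t₃ ∨ t₃ + p₃ ≤ t₁)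
    (h₂₃ : t₂ + p₂ ≤ t₃ ∨ t₃ + p₃ ≤ t₂) :
    p₁ + p₂ + p₃ ≤ T := by
  omega

lemma dl_le_three (j : Fin 4) : dl j ≤ 3 := by
  fin_cases j <;> decide

lemma NightFeasible.pt_add_pt_add_pt_le {s : Fin 4 → Option ℕ} (hs : NightFeasible s)
    {j k l : Fin 4} (hjk : j ≠ k) (hjl : j ≠ l) (hkl : k ≠ l)
    (hj : (s j).isSome) (hk : (s k).isSome) (hl : (s l).isSome) :
    pt j + pt k + pt l ≤ 3 := by
  obtain ⟨tj, hj⟩ := Option.isSome_iff_exists.mp hj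
  obtain ⟨tk, hk⟩ := Option.isSome_iff_exists.mp hk
  obtain ⟨tl, hl⟩ := Option.isSome_iff_exists.mp hl
  have finishes_by_three {i : Fin 4} {t : ℕ} (h : s i = some t) : t + pt i ≤ 3 :=
    ((hs.1 i t h).2).trans (dl_le_three i)
  exact add_add_le_of_pairwise_disjoint
    (finishes_by_three hj) (finishes_by_three hk) (finishes_by_three hl)
    (hs.2 j k tj tk hjk hj hk) (hs.2 j l tj tl hjl hj hl) (hs.2 k l tk tl hkl hk hl)

lemma scheduled_of_four_lt_nightGain {s : Fin 4 → Option ℕ} (h : 4 < nightGain s) :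
    (s 2).isSome ∧ (s 3).isSome ∧ ((s 0).isSome ∨ (s 1).isSome) := by
  simp only [nightGain, Fin.sum_univ_four, wt] at h
  revert h
  cases (s 0).isSome <;> cases (s 1).isSome <;> cases (s 2).isSome <;> cases (s 3).isSome <;>
    simp

lemma NightFeasible.nightGain_le_four {s : Fin 4 → Option ℕ} (hs : NightFeasible s) :
    nightGain s ≤ 4 := by
  by_contra! h
  obtain ⟨hC, hD, hA | hB⟩ := scheduled_of_four_lt_nightGain h
  · have := hs.pt_add_pt_add_pt_le (by decide) (by decide) (by decide) hA hC hD
    simp [pt] at this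
  · have := hs.pt_add_pt_add_pt_le (by decide) (by decide) (by decide) hB hC hD
    simp [pt] at this

lemma nightGain_eq_six_of_forall_isSome {s : Fin 4 → Option ℕ} (h : ∀ j, (s j).isSome) :
    nightGain s = 6 := by
  simp [nightGain, Fin.sum_univ_four, h, wt]

/-- no single night can schedule all four observations, and no
single night achieves a gain strictly greater than 4. -/
theorem no_night_schedules_all_and_gain_le_four :
    (∀ s, NightFeasible s → ¬ (∀ j, (s j).isSome)) ∧
    (∀ s, NightFeasible s → ¬ (4 < nightGain s)) := by
  refine ⟨fun s hs hall => ?_, fun s hs => hs.nightGain_le_four.not_gt⟩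
  have := hs.nightGain_le_four
  rw [nightGain_eq_six_of_forall_isSome hall] at this
  omega
end
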